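/- arXiv:2004.03389 — 3 statements merged into one kernel-verified Lean document; each statement's English description precedes it below -/
import Mathlib

section
/- Let d ∈ ℕ, ε, T > 0, let 𝒪 ⊆ ℝ^d be a non-empty open set, let u : (0,T) × 𝒪 → ℝ be upper semi-continuous, let t ∈ (0,T), x ∈ 𝒪, and let (b,p,A) be an element of the parabolic superjet of u at (t,x). Then there exists φ ∈ C^{1,2}((0,T) × 𝒪, ℝ) such that (i) (b, p, A + ε·Id) = ((∂φ/∂t)(t,x), (∇_x φ)(t,x), (Hess_x φ)(t,x)) and (ii) u − φ has a local maximum at (t,x). -/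
open Set Filter Topology Matrix
open scoped NNReal RealInnerProductSpace

noncomputable section

/-- Euclidean space `ℝ^d`. -/
abbrev E (d : ℕ) := EuclideanSpace ℝ (Fin d)

/-- The partial derivative in the time variable. -/
noncomputable def ptime {d : ℕ} (φ : ℝ → E d → ℝ) (t : ℝ) (x : E d) : ℝ :=
  deriv (fun s => φ s x) t

/-- The spatial gradient. -/
noncomputable def pgrad {d : ℕ} (φ : ℝ → E d → ℝ) (t : ℝ) (x : E d) : E d :=
  gradient (fun y => φ t y) x

/-- The spatial Hessian, as a `d × d` matrix of second partial derivatives. -/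
noncomputable def phess {d : ℕ} (φ : ℝ → E d → ℝ) (t : ℝ) (x : E d) :
    Matrix (Fin d) (Fin d) ℝ :=
  fun i j => fderiv ℝ (fun y => fderiv ℝ (fun z => φ t z) y (EuclideanSpace.single j 1)) x
    (EuclideanSpace.single i 1)

/-- `φ` is of class `C^{1,2}` on `(0,T) × O`:  jointly continuous, continuously differentiable
in the time variable, twice continuously differentiable in the space variable, with jointly
continuous time derivative, spatial gradient and spatial Hessian. -/
def C12On {d : ℕ} (T : ℝ) (O : Set (E d)) (φ : ℝ → E d → ℝ) : Prop :=
  ContinuousOn (fun p : ℝ × E d => φ p.1 p.2) (Ioo 0 T ×ˢ O) ∧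
  (∀ t ∈ Ioo (0:ℝ) T, ∀ x ∈ O, HasDerivAt (fun s => φ s x) (ptime φ t x) t) ∧
  (∀ t ∈ Ioo (0:ℝ) T, ∀ x ∈ O, ContDiffAt ℝ 2 (fun y => φ t y) x) ∧
  ContinuousOn (fun p : ℝ × E d => ptime φ p.1 p.2) (Ioo 0 T ×ˢ O) ∧
  ContinuousOn (fun p : ℝ × E d => pgrad φ p.1 p.2) (Ioo 0 T ×ˢ O) ∧
  ContinuousOn (fun p : ℝ × E d => phess φ p.1 p.2) (Ioo 0 T ×ˢ O)

/-- `G` is degenerate elliptic on `(0,T) × O × ℝ × ℝ^d × S_d`: it is monotone in the matrix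
argument with respect to the Loewner order on symmetric matrices. -/
def DegenerateElliptic {d : ℕ} (T : ℝ) (O : Set (E d))
    (G : ℝ → E d → ℝ → E d → Matrix (Fin d) (Fin d) ℝ → ℝ) : Prop :=
  ∀ t ∈ Ioo (0:ℝ) T, ∀ x ∈ O, ∀ (r : ℝ) (p : E d) (A B : Matrix (Fin d) (Fin d) ℝ),
    A.IsSymm → B.IsSymm → (∀ y : Fin d → ℝ, A.mulVec y ⬝ᵥ y ≤ B.mulVec y ⬝ᵥ y) →
    G t x r p A ≤ G t x r p B

/-- `u` is a viscosity subsolution of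
`∂ₜ u + G(t,x,u,∇ₓu,Hessₓu) = 0` on `(0,T) × O`. -/
def IsViscositySubsolution {d : ℕ} (T : ℝ) (O : Set (E d))
    (G : ℝ → E d → ℝ → E d → Matrix (Fin d) (Fin d) ℝ → ℝ) (u : ℝ → E d → ℝ) : Prop :=
  UpperSemicontinuousOn (fun p : ℝ × E d => u p.1 p.2) (Ioo 0 T ×ˢ O) ∧
  ∀ t ∈ Ioo (0:ℝ) T, ∀ x ∈ O, ∀ φ : ℝ → E d → ℝ, C12On T O φ →
    (∀ s ∈ Ioo (0:ℝ) T, ∀ y ∈ O, u s y ≤ φ s y) → φ t x = u t x →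
    0 ≤ ptime φ t x + G t x (φ t x) (pgrad φ t x) (phess φ t x)

/-- `u` is a viscosity supersolution of
`∂ₜ u + G(t,x,u,∇ₓu,Hessₓu) = 0` on `(0,T) × O`. -/
def IsViscositySupersolution {d : ℕ} (T : ℝ) (O : Set (E d))
    (G : ℝ → E d → ℝ → E d → Matrix (Fin d) (Fin d) ℝ → ℝ) (u : ℝ → E d → ℝ) : Prop :=
  LowerSemicontinuousOn (fun p : ℝ × E d => u p.1 p.2) (Ioo 0 T ×ˢ O) ∧
  ∀ t ∈ Ioo (0:ℝ) T, ∀ x ∈ O, ∀ φ : ℝ → E d → ℝ, C12On T O φ →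
    (∀ s ∈ Ioo (0:ℝ) T, ∀ y ∈ O, φ s y ≤ u s y) → φ t x = u t x →
    ptime φ t x + G t x (φ t x) (pgrad φ t x) (phess φ t x) ≤ 0

/-- `u` is a viscosity solution of `∂ₜ u + G(t,x,u,∇ₓu,Hessₓu) = 0` on `(0,T) × O`. -/
def IsViscositySolution {d : ℕ} (T : ℝ) (O : Set (E d))
    (G : ℝ → E d → ℝ → E d → Matrix (Fin d) (Fin d) ℝ → ℝ) (u : ℝ → E d → ℝ) : Prop :=
  IsViscositySubsolution T O G u ∧ IsViscositySupersolution T O G u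

/-- `(b, p, A)` belongs to the parabolic superjet of `u` at `(t,x)` (relative to
`(0,T) × O`):  `A` is symmetric and
`limsup_{(s,y)→(t,x)} [u(s,y) − u(t,x) − b(s−t) − ⟪p, y−x⟫ − ½⟪A(y−x), y−x⟫] / (|t−s| + ‖x−y‖²) ≤ 0`. -/
def MemSuperjet {d : ℕ} (T : ℝ) (O : Set (E d)) (u : ℝ → E d → ℝ) (t : ℝ) (x : E d)
    (b : ℝ) (p : E d) (A : Matrix (Fin d) (Fin d) ℝ) : Prop :=
  A.IsSymm ∧
  ∀ ε > (0:ℝ), ∀ᶠ q : ℝ × E d in 𝓝[(Ioo 0 T ×ˢ O) \ {(t, x)}] (t, x),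
    u q.1 q.2 - u t x - b * (q.1 - t) - (inner ℝ p (q.2 - x) : ℝ)
      - (1/2) * (A.mulVec (fun i => (q.2 - x) i) ⬝ᵥ (fun i => (q.2 - x) i))
    ≤ ε * (|t - q.1| + ‖x - q.2‖ ^ 2)

end

/-!
With `B = A + ε • 1`, the superjet inequality gives, for every `e > 0` and all `(s, y)` close
enough to `(t, x)`,
`u(s,y) - u(t,x) - b(s-t) - ⟪p, y-x⟫ - ½⟪B(y-x), y-x⟫ ≤ e|s-t| - (ε/4)‖y-x‖²`:
the extra `ε • 1` absorbs the spatial error. Points spatially far from `x` therefore contribute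
nothing for small `|s-t|`, so the left side is bounded by `m(|s-t|)` for a monotone modulus
`m(r) = o(r)`. Integrating twice dominates `m` by a `C¹` function `W` vanishing on `(-∞, 0]`, and
`u(t,x) + b(s-t) + W(s-t) + W(t-s) + ⟪p, y-x⟫ + ½⟪B(y-x), y-x⟫` is the test function.
-/

open Asymptotics intervalIntegral MeasureTheory

lemma intervalIntegral_eq_zero_of_nonpos {f : ℝ → ℝ} (hf : ∀ τ ≤ 0, f τ = 0) {r : ℝ}
    (hr : r ≤ 0) : ∫ τ in (0:ℝ)..r, f τ = 0 := by
  rw [integral_symm, neg_eq_zero]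
  refine (integral_congr fun τ hτ => ?_).trans integral_zero
  rw [uIcc_of_le hr] at hτ
  exact hf τ hτ.2

lemma Monotone.mul_le_intervalIntegral {m : ℝ → ℝ} (hm : Monotone m) {a b : ℝ} (hab : a ≤ b) :
    (b - a) * m a ≤ ∫ τ in a..b, m τ := by
  simpa using integral_mono_on hab intervalIntegrable_const (hm.intervalIntegrable (μ := volume))
    fun τ hτ => hm hτ.1

lemma Monotone.intervalIntegral_le_mul {m : ℝ → ℝ} (hm : Monotone m) {a b : ℝ} (hab : a ≤ b) :
    ∫ τ in a..b, m τ ≤ (b - a) * m b := by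
  simpa using integral_mono_on hab (hm.intervalIntegrable (μ := volume)) intervalIntegrable_const
    fun τ hτ => hm hτ.2

lemma Continuous.contDiff_one_primitive {g : ℝ → ℝ} (hg : Continuous g) (a : ℝ) :
    ContDiff ℝ 1 fun r => ∫ τ in a..r, g τ := by
  have hderiv : ∀ r, HasDerivAt (fun r => ∫ τ in a..r, g τ) (g r) r := fun r =>
    (hg.integral_hasStrictDerivAt a r).hasDerivAt
  refine contDiff_one_iff_deriv.2 ⟨fun r => (hderiv r).differentiableAt, ?_⟩
  rwa [show deriv (fun r => ∫ τ in a..r, g τ) = g from funext fun r => (hderiv r).deriv]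

-- At `τ = 0` the function takes the value `k * M 0 / 0 = 0`.
lemma continuous_mul_comp_div_sq {M : ℝ → ℝ} (hM : Continuous M)
    (ho : M =o[𝓝 0] fun r => r ^ 2) (k c : ℝ) : Continuous fun τ => k * M (c * τ) / τ ^ 2 := by
  refine continuous_iff_continuousAt.2 fun τ => ?_
  rcases eq_or_ne τ 0 with rfl | hτ
  · have hc : Tendsto (fun τ : ℝ => c * τ) (𝓝 0) (𝓝 0) := by
      simpa using (continuous_const_mul c).tendsto 0
    have hlo : (fun τ => k * M (c * τ)) =o[𝓝 0] fun τ => τ ^ 2 := by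
      refine ((ho.comp_tendsto hc).const_mul_left k).trans_isBigO ?_
      simpa [Function.comp_def, mul_pow] using
        (isBigO_refl (fun τ : ℝ => τ ^ 2) _).const_mul_left (c ^ 2)
    simpa [ContinuousAt] using hlo.tendsto_div_nhds_zero
  · exact ((continuous_const.mul (hM.comp (continuous_const_mul c))).continuousAt).div
      (continuous_pow 2).continuousAt (pow_ne_zero 2 hτ)

section Majorant

variable {m : ℝ → ℝ}

lemma Monotone.nonneg_of_eq_zero_of_nonpos (hm : Monotone m) (hm0 : ∀ r ≤ 0, m r = 0) (r : ℝ) :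
    0 ≤ m r := by
  rcases le_total r 0 with hr | hr
  · exact (hm0 r hr).ge
  · exact hm0 0 le_rfl ▸ hm hr

lemma Monotone.monotone_primitive (hm : Monotone m) (hm0 : ∀ r ≤ 0, m r = 0) :
    Monotone fun r => ∫ τ in (0:ℝ)..r, m τ := fun a b hab => by
  dsimp only
  rw [← integral_add_adjacent_intervals (hm.intervalIntegrable (a := 0) (b := a))
    (hm.intervalIntegrable (b := b))]
  linarith [integral_nonneg (μ := volume) hab fun τ _ => hm.nonneg_of_eq_zero_of_nonpos hm0 τ]

lemma Monotone.mul_le_primitive_two_mul (hm : Monotone m) (hm0 : ∀ r ≤ 0, m r = 0) {r : ℝ}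
    (hr : 0 ≤ r) : r * m r ≤ ∫ τ in (0:ℝ)..2 * r, m τ := by
  rw [← integral_add_adjacent_intervals (hm.intervalIntegrable (a := 0) (b := r))
    (hm.intervalIntegrable (b := 2 * r))]
  have h₁ := hm.mul_le_intervalIntegral (show r ≤ 2 * r by linarith)
  have h₂ := hm.monotone_primitive hm0 hr
  simp only [intervalIntegral.integral_same] at h₂
  linarith

lemma Monotone.isLittleO_primitive_sq (hm : Monotone m) (hm0 : ∀ r ≤ 0, m r = 0)
    (ho : m =o[𝓝 0] id) : (fun r => ∫ τ in (0:ℝ)..r, m τ) =o[𝓝 0] fun r => r ^ 2 := by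
  have hbound : ∀ r, ‖∫ τ in (0:ℝ)..r, m τ‖ ≤ 1 * ‖r * m r‖ := by
    intro r
    rcases le_total r 0 with hr | hr
    · rw [intervalIntegral_eq_zero_of_nonpos hm0 hr, norm_zero]
      positivity
    · have hnn := hm.nonneg_of_eq_zero_of_nonpos hm0
      rw [Real.norm_of_nonneg (integral_nonneg hr fun τ _ => hnn τ), one_mul,
        Real.norm_of_nonneg (mul_nonneg hr (hnn r))]
      simpa using hm.intervalIntegral_le_mul hr
  have hprod : (fun r : ℝ => r * m r) =o[𝓝 0] fun r => r * r :=
    (isBigO_refl (fun r : ℝ => r) _).mul_isLittleO ho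
  simpa [sq] using (IsBigO.of_bound 1 (Eventually.of_forall hbound)).trans_isLittleO hprod

lemma Monotone.exists_contDiff_majorant (hm : Monotone m) (hm0 : ∀ r ≤ 0, m r = 0)
    (ho : m =o[𝓝 0] id) : ∃ W : ℝ → ℝ, ContDiff ℝ 1 W ∧ (∀ r ≤ 0, W r = 0) ∧ m ≤ W := by
  set M : ℝ → ℝ := fun r => ∫ τ in (0:ℝ)..r, m τ
  have hM_mono : Monotone M := hm.monotone_primitive hm0
  have hM_nonpos : ∀ r ≤ 0, M r = 0 := fun r => intervalIntegral_eq_zero_of_nonpos hm0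
  have hM_nonneg : ∀ r, 0 ≤ M r := hM_mono.nonneg_of_eq_zero_of_nonpos hM_nonpos
  set g : ℝ → ℝ := fun τ => 2 * M (4 * τ) / τ ^ 2 with hg
  have hg_cont : Continuous g :=
    continuous_mul_comp_div_sq (continuous_primitive (fun _ _ => hm.intervalIntegrable) 0)
      (hm.isLittleO_primitive_sq hm0 ho) 2 4
  have hg_nonneg : ∀ τ, 0 ≤ g τ := fun τ => by have := hM_nonneg (4 * τ); positivity
  have hg_nonpos : ∀ τ ≤ 0, g τ = 0 := fun τ hτ => by
    simp [hg, hM_nonpos _ (by linarith : 4 * τ ≤ 0)]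
  set W : ℝ → ℝ := fun r => ∫ τ in (0:ℝ)..r, g τ with hW
  refine ⟨W, hg_cont.contDiff_one_primitive 0,
    fun r => intervalIntegral_eq_zero_of_nonpos hg_nonpos, fun r => ?_⟩
  rcases le_or_gt r 0 with hr | hr
  · simp [hm0 r hr, hW, intervalIntegral_eq_zero_of_nonpos hg_nonpos hr]
  -- On `[r/2, r]` we have `g ≥ 2 M(2r) / r²`, and `M(2r) ≥ r m(r)`.
  have hlow : (r - r / 2) * (2 * M (2 * r) / r ^ 2) ≤ ∫ τ in (r/2)..r, g τ := by
    rw [← smul_eq_mul, ← intervalIntegral.integral_const]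
    refine integral_mono_on (by linarith) intervalIntegrable_const
      (hg_cont.intervalIntegrable _ _) fun τ hτ => ?_
    have hτ0 : 0 < τ := by linarith [hτ.1]
    exact div_le_div₀ (by have := hM_nonneg (4 * τ); positivity)
      (by linarith [hM_mono (show 2 * r ≤ 4 * τ by linarith [hτ.1])]) (by positivity)
      (pow_le_pow_left₀ hτ0.le hτ.2 2)
  have hsplit : W r = W (r / 2) + ∫ τ in (r/2)..r, g τ :=
    (integral_add_adjacent_intervals (hg_cont.intervalIntegrable _ _)
      (hg_cont.intervalIntegrable _ _)).symm
  have hW_half : 0 ≤ W (r / 2) := integral_nonneg (by linarith) fun τ _ => hg_nonneg τ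
  have hfrac : (r - r / 2) * (2 * M (2 * r) / r ^ 2) = M (2 * r) / r := by
    field_simp; ring
  have hmr : m r ≤ M (2 * r) / r := by
    rw [le_div_iff₀ hr]; linarith [hm.mul_le_primitive_two_mul hm0 hr.le]
  linarith

end Majorant

section Modulus

variable {X : Type*} [PseudoMetricSpace X] {S : Set (ℝ × X)} {F : ℝ × X → ℝ} {t : ℝ} {x : X}
  {c : ℝ}

lemma exists_modulus_of_eventually_le (hc : 0 < c)
    (hF : ∀ e > 0, ∀ᶠ q in 𝓝[S] (t, x), F q ≤ e * |q.1 - t| - c * dist q.2 x ^ 2) :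
    ∃ m : ℝ → ℝ, Monotone m ∧ (∀ r ≤ 0, m r = 0) ∧ m =o[𝓝 0] id ∧
      ∀ᶠ q in 𝓝[S] (t, x), F q ≤ m |q.1 - t| := by
  obtain ⟨δ, hδ, hFδ⟩ := Metric.eventually_nhds_iff.1 (eventually_nhdsWithin_iff.1 (hF 1 one_pos))
  set K : ℝ → Set (ℝ × X) := fun r => {q | q ∈ S ∧ dist q (t, x) < δ ∧ |q.1 - t| ≤ r}
  set m : ℝ → ℝ := fun r => sSup ((fun q => max (F q) 0) '' K r)
  have hK_le : ∀ r, ∀ q ∈ K r, max (F q) 0 ≤ max r 0 := fun r q ⟨hqS, hqδ, hqr⟩ =>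
    max_le_max (by nlinarith [hFδ hqδ hqS, sq_nonneg (dist q.2 x)]) le_rfl
  have hbdd : ∀ r, BddAbove ((fun q => max (F q) 0) '' K r) := fun r =>
    ⟨max r 0, by rintro _ ⟨q, hq, rfl⟩; exact hK_le r q hq⟩
  have hm_nonneg : ∀ r, 0 ≤ m r := fun r =>
    Real.sSup_nonneg (by rintro _ ⟨q, -, rfl⟩; exact le_max_right _ _)
  have hle_m : ∀ r, ∀ q ∈ K r, F q ≤ m r := fun r q hq =>
    (le_max_left _ _).trans (le_csSup (hbdd r) ⟨q, hq, rfl⟩)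
  refine ⟨m, fun r r' hrr' => ?_, fun r hr => ?_, ?_, ?_⟩
  · refine Real.sSup_le ?_ (hm_nonneg r')
    rintro _ ⟨q, ⟨hqS, hqδ, hqr⟩, rfl⟩
    exact le_csSup (hbdd r') ⟨q, ⟨hqS, hqδ, hqr.trans hrr'⟩, rfl⟩
  · refine le_antisymm (Real.sSup_nonpos ?_) (hm_nonneg r)
    rintro _ ⟨q, hq, rfl⟩
    simpa [max_eq_right hr] using hK_le r q hq
  · refine IsLittleO.of_bound fun e he => ?_
    obtain ⟨ρ, hρ, hFρ⟩ :=
      Metric.eventually_nhds_iff.1 (eventually_nhdsWithin_iff.1 (hF e he))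
    -- Points at spatial distance `≥ ρ` have `F ≤ r - c ρ²`, which is `≤ 0` once `r ≤ c ρ²`.
    filter_upwards [Metric.ball_mem_nhds (0:ℝ) (lt_min hρ (mul_pos hc (pow_pos hρ 2)))]
      with r hr
    rw [Metric.mem_ball, Real.dist_0_eq_abs, lt_min_iff] at hr
    rw [Real.norm_of_nonneg (hm_nonneg r), id, Real.norm_eq_abs]
    refine Real.sSup_le ?_ (by positivity)
    rintro _ ⟨q, ⟨hqS, hqδ, hqr⟩, rfl⟩
    refine max_le ?_ (by positivity)
    have hqr' : |q.1 - t| ≤ |r| := hqr.trans (le_abs_self r)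
    rcases lt_or_ge (dist q.2 x) ρ with hq2 | hq2
    · have hq : dist q (t, x) < ρ := by
        rw [Prod.dist_eq, Real.dist_eq]; exact max_lt (by linarith) hq2
      nlinarith [hFρ hq hqS, sq_nonneg (dist q.2 x)]
    · nlinarith [hFδ hqδ hqS, pow_le_pow_left₀ hρ.le hq2 2, abs_nonneg r]
  · filter_upwards [self_mem_nhdsWithin, mem_nhdsWithin_of_mem_nhds (Metric.ball_mem_nhds _ hδ)]
      with q hqS hqδ
    exact hle_m _ q ⟨hqS, hqδ, le_rfl⟩

lemma exists_contDiff_bound_of_eventually_le (hc : 0 < c)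
    (hF : ∀ e > 0, ∀ᶠ q in 𝓝[S] (t, x), F q ≤ e * |q.1 - t| - c * dist q.2 x ^ 2) :
    ∃ W : ℝ → ℝ, ContDiff ℝ 1 W ∧ (∀ r ≤ 0, W r = 0) ∧
      ∀ᶠ q in 𝓝[S] (t, x), F q ≤ W (q.1 - t) + W (t - q.1) := by
  obtain ⟨m, hm, hm0, ho, hFm⟩ := exists_modulus_of_eventually_le hc hF
  obtain ⟨W, hW, hW0, hmW⟩ := hm.exists_contDiff_majorant hm0 ho
  refine ⟨W, hW, hW0, hFm.mono fun q hq => ?_⟩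
  rcases le_total t q.1 with h | h
  · rw [abs_of_nonneg (sub_nonneg.2 h)] at hq
    linarith [hmW (q.1 - t), hW0 (t - q.1) (by linarith)]
  · rw [abs_of_nonpos (sub_nonpos.2 h), neg_sub] at hq
    linarith [hmW (t - q.1), hW0 (q.1 - t) (by linarith)]

end Modulus

section TaylorQuadratic

variable {F : Type*} [NormedAddCommGroup F] [InnerProductSpace ℝ F]

noncomputable def taylorQuadratic (p x : F) (T : F →L[ℝ] F) (y : F) : ℝ :=
  ⟪p, y - x⟫ + 1 / 2 * ⟪y - x, T (y - x)⟫

@[simp]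
lemma taylorQuadratic_self (p x : F) (T : F →L[ℝ] F) : taylorQuadratic p x T x = 0 := by
  simp [taylorQuadratic]

lemma contDiff_taylorQuadratic (p x : F) (T : F →L[ℝ] F) {n : WithTop ℕ∞} :
    ContDiff ℝ n (taylorQuadratic p x T) := by
  have hsub : ContDiff ℝ n fun y : F => y - x := contDiff_id.sub contDiff_const
  exact (contDiff_const.inner ℝ hsub).add
    (contDiff_const.mul (hsub.inner ℝ (T.contDiff.comp hsub)))

variable [CompleteSpace F] {T : F →L[ℝ] F}

lemma hasGradientAt_taylorQuadratic (hT : (T : F →ₗ[ℝ] F).IsSymmetric) (p x y : F) :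
    HasGradientAt (taylorQuadratic p x T) (p + T (y - x)) y := by
  rw [hasGradientAt_iff_hasFDerivAt]
  have hsub : HasFDerivAt (fun z : F => z - x) (ContinuousLinearMap.id ℝ F) y :=
    (hasFDerivAt_id y).sub_const x
  refine (((innerSL ℝ p).hasFDerivAt.comp y hsub).add
    ((hsub.inner ℝ (T.hasFDerivAt.comp y hsub)).const_mul (1 / 2))).congr_fderiv ?_
  ext w
  have hsymm : ⟪y - x, T w⟫ = ⟪T (y - x), w⟫ := (hT.apply_clm (y - x) w).symm
  simp only [FunLike.coe_add, Pi.add_apply, FunLike.coe_smul, Pi.smul_apply,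
    ContinuousLinearMap.comp_apply, ContinuousLinearMap.prod_apply, fderivInnerCLM_apply,
    InnerProductSpace.toDual_apply_apply, innerSL_apply_apply, ContinuousLinearMap.id_apply,
    Function.comp_apply, smul_eq_mul]
  rw [hsymm, real_inner_comm (T (y - x)) w, inner_add_left]
  ring

lemma fderiv_fderiv_taylorQuadratic (hT : (T : F →ₗ[ℝ] F).IsSymmetric) (p x y v w : F) :
    fderiv ℝ (fun z => fderiv ℝ (taylorQuadratic p x T) z v) y w = ⟪T w, v⟫ := by
  have hD : (fun z => fderiv ℝ (taylorQuadratic p x T) z v) = fun z => ⟪p + T (z - x), v⟫ :=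
    funext fun z => by
      rw [(hasGradientAt_taylorQuadratic hT p x z).hasFDerivAt.fderiv,
        InnerProductSpace.toDual_apply_apply]
  have hT' : HasFDerivAt (fun z => p + T (z - x)) T y := by
    simpa using (T.hasFDerivAt.comp y ((hasFDerivAt_id y).sub_const x)).const_add p
  rw [hD, (hT'.inner ℝ (hasFDerivAt_const v y)).fderiv]
  simp [fderivInnerCLM_apply]

end TaylorQuadratic

section Euclidean

variable {n : Type*} [Fintype n] [DecidableEq n]

lemma inner_toEuclideanCLM_self (B : Matrix n n ℝ) (v : EuclideanSpace ℝ n) :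
    ⟪v, toEuclideanCLM (𝕜 := ℝ) B v⟫ = B.mulVec (fun i => v i) ⬝ᵥ (fun i => v i) := by
  rw [inner_toEuclideanCLM, dotProduct_comm]

lemma inner_toEuclideanCLM_single (B : Matrix n n ℝ) (i j : n) :
    ⟪toEuclideanCLM (𝕜 := ℝ) B (EuclideanSpace.single i 1), EuclideanSpace.single j 1⟫ = B j i := by
  simp [EuclideanSpace.inner_single_right]

lemma isSymmetric_toEuclideanCLM {B : Matrix n n ℝ} (hB : B.IsSymm) :
    (toEuclideanCLM (𝕜 := ℝ) B : EuclideanSpace ℝ n →ₗ[ℝ] EuclideanSpace ℝ n).IsSymmetric :=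
  isSymmetric_toEuclideanLin_iff.2 (isHermitian_iff_isSymm.2 hB)

end Euclidean

section Separated

variable {d : ℕ}

lemma ptime_separated (f : ℝ → ℝ) (g : E d → ℝ) (s : ℝ) (y : E d) :
    ptime (fun s y => f s + g y) s y = deriv f s :=
  deriv_add_const _

lemma pgrad_separated (f : ℝ → ℝ) (g : E d → ℝ) (s : ℝ) (y : E d) :
    pgrad (fun s y => f s + g y) s y = gradient g y := by
  unfold pgrad gradient
  rw [fderiv_const_add]

lemma phess_separated (f : ℝ → ℝ) (g : E d → ℝ) (s : ℝ) (y : E d) :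
    phess (fun s y => f s + g y) s y = Matrix.of fun i j => fderiv ℝ
      (fun z => fderiv ℝ g z (EuclideanSpace.single j 1)) y (EuclideanSpace.single i 1) := by
  ext i j
  simp only [phess, of_apply, fderiv_const_add]

lemma c12On_separated {f : ℝ → ℝ} {g : E d → ℝ} (hf : ContDiff ℝ 1 f) (hg : ContDiff ℝ 2 g)
    (T : ℝ) (O : Set (E d)) : C12On T O (fun s y => f s + g y) := by
  have hDg : ContDiff ℝ 1 (fderiv ℝ g) := hg.fderiv_right (by norm_num)
  refine ⟨((hf.continuous.comp continuous_fst).add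
    (hg.continuous.comp continuous_snd)).continuousOn, fun s _ y _ => ?_,
    fun s _ y _ => (contDiff_const.add hg).contDiffAt, ?_, ?_, ?_⟩
  · rw [ptime_separated]
    exact ((hf.differentiable one_ne_zero s).hasDerivAt).add_const _
  · simp only [ptime_separated]
    exact ((hf.continuous_deriv le_rfl).comp continuous_fst).continuousOn
  · simp only [pgrad_separated, gradient]
    exact ((InnerProductSpace.toDual ℝ (E d)).symm.continuous.comp
      ((hg.continuous_fderiv two_ne_zero).comp continuous_snd)).continuousOn
  · simp only [phess_separated]
    refine (continuous_pi fun i => continuous_pi fun j => ?_).continuousOn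
    exact (((hDg.clm_apply contDiff_const).continuous_fderiv one_ne_zero).clm_apply
      continuous_const).comp continuous_snd

end Separated

lemma hasDerivAt_comp_sub_add_comp_sub_self {W : ℝ → ℝ} (hW : DifferentiableAt ℝ W 0) (t : ℝ) :
    HasDerivAt (fun s => W (s - t) + W (t - s)) 0 t := by
  have hW' : HasDerivAt W (deriv W 0) (t - t) := by rw [sub_self]; exact hW.hasDerivAt
  exact ((hW'.comp_sub_const t t).add (hW'.comp_const_sub t t)).congr_deriv (add_neg_cancel _)

lemma MemSuperjet.eventually_le {d : ℕ} {T ε : ℝ} {O : Set (E d)} {u : ℝ → E d → ℝ} {t : ℝ}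
    {x : E d} {b : ℝ} {p : E d} {A : Matrix (Fin d) (Fin d) ℝ}
    (hjet : MemSuperjet T O u t x b p A) (hε : 0 < ε) :
    ∀ e > 0, ∀ᶠ q in 𝓝[Ioo 0 T ×ˢ O] (t, x),
      u q.1 q.2 - u t x - b * (q.1 - t)
          - taylorQuadratic p x (toEuclideanCLM (𝕜 := ℝ) (A + ε • 1)) q.2
        ≤ e * |q.1 - t| - ε / 4 * dist q.2 x ^ 2 := by
  intro e he
  have h := hjet.2 (min e (ε / 4)) (by positivity)
  rw [eventually_nhdsWithin_iff] at h ⊢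
  filter_upwards [h] with q hq hqS
  rcases eq_or_ne q (t, x) with rfl | hne
  · simp
  have hjet_q := hq ⟨hqS, hne⟩
  have hquad : ⟪q.2 - x, toEuclideanCLM (𝕜 := ℝ) (A + ε • 1) (q.2 - x)⟫
      = A.mulVec (fun i => (q.2 - x) i) ⬝ᵥ (fun i => (q.2 - x) i) + ε * dist q.2 x ^ 2 := by
    have hsplit : toEuclideanCLM (𝕜 := ℝ) (A + ε • 1) (q.2 - x)
        = toEuclideanCLM (𝕜 := ℝ) A (q.2 - x) + ε • (q.2 - x) := by
      simp
    rw [hsplit, inner_add_right, inner_smul_right, real_inner_self_eq_norm_sq,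
      inner_toEuclideanCLM_self, dist_eq_norm]
  rw [abs_sub_comm, norm_sub_rev, ← dist_eq_norm] at hjet_q
  have h₁ : min e (ε / 4) * |q.1 - t| ≤ e * |q.1 - t| :=
    mul_le_mul_of_nonneg_right (min_le_left _ _) (abs_nonneg _)
  have h₂ : min e (ε / 4) * dist q.2 x ^ 2 ≤ ε / 4 * dist q.2 x ^ 2 :=
    mul_le_mul_of_nonneg_right (min_le_right _ _) (sq_nonneg _)
  rw [taylorQuadratic, hquad]
  linarith

theorem superjet_realised_by_test_function_general
    (d : ℕ) (ε T : ℝ) (hε : 0 < ε)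
    (O : Set (E d))
    (u : ℝ → E d → ℝ)
    (t : ℝ) (x : E d)
    (b : ℝ) (p : E d) (A : Matrix (Fin d) (Fin d) ℝ)
    (hjet : MemSuperjet T O u t x b p A) :
    ∃ φ : ℝ → E d → ℝ, C12On T O φ ∧
      ptime φ t x = b ∧ pgrad φ t x = p ∧
      phess φ t x = A + ε • (1 : Matrix (Fin d) (Fin d) ℝ) ∧
      IsLocalMaxOn (fun q : ℝ × E d => u q.1 q.2 - φ q.1 q.2) (Ioo 0 T ×ˢ O) (t, x) := by
  set B := A + ε • (1 : Matrix (Fin d) (Fin d) ℝ)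
  have hB : B.IsSymm := hjet.1.add (isSymm_one.smul ε)
  have hTB := isSymmetric_toEuclideanCLM hB
  obtain ⟨W, hW, hW0, hle⟩ :=
    exists_contDiff_bound_of_eventually_le (by positivity : 0 < ε / 4) (hjet.eventually_le hε)
  set f : ℝ → ℝ := fun s => u t x + b * (s - t) + (W (s - t) + W (t - s))
  have hf : ContDiff ℝ 1 f := by fun_prop
  have hf' : HasDerivAt f b t := by
    have h := ((((hasDerivAt_id t).sub_const t).const_mul b).const_add (u t x)).add
      (hasDerivAt_comp_sub_add_comp_sub_self (hW.differentiable one_ne_zero 0) t)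
    rw [mul_one, add_zero] at h
    exact h
  refine ⟨fun s y => f s + taylorQuadratic p x (toEuclideanCLM (𝕜 := ℝ) B) y,
    c12On_separated hf (contDiff_taylorQuadratic _ _ _) T O, ?_, ?_, ?_, ?_⟩
  · rw [ptime_separated, hf'.deriv]
  · rw [pgrad_separated, (hasGradientAt_taylorQuadratic hTB p x x).gradient]
    simp
  · rw [phess_separated]
    ext i j
    rw [of_apply, fderiv_fderiv_taylorQuadratic hTB, inner_toEuclideanCLM_single, hB.apply]
  · filter_upwards [hle] with q hq
    simp only [f, taylorQuadratic_self, sub_self, hW0 0 le_rfl]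
    linarith

/-- Every element `(b,p,A)` of the parabolic superjet of an upper
semicontinuous function `u` at `(t,x) ∈ (0,T) × O` is realised (after adding `ε·Id` to the
matrix) by the derivatives of a `C^{1,2}` test function `φ` such that `u − φ` has a local
maximum at `(t,x)`. -/
theorem superjet_realised_by_test_function
    (d : ℕ) (hd : 0 < d) (ε T : ℝ) (hε : 0 < ε) (hT : 0 < T)
    (O : Set (E d)) (hOne : O.Nonempty) (hOopen : IsOpen O)
    (u : ℝ → E d → ℝ)
    (husc : UpperSemicontinuousOn (fun p : ℝ × E d => u p.1 p.2) (Ioo 0 T ×ˢ O))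
    (t : ℝ) (x : E d) (ht : t ∈ Ioo (0:ℝ) T) (hx : x ∈ O)
    (b : ℝ) (p : E d) (A : Matrix (Fin d) (Fin d) ℝ)
    (hjet : MemSuperjet T O u t x b p A) :
    ∃ φ : ℝ → E d → ℝ, C12On T O φ ∧
      ptime φ t x = b ∧ pgrad φ t x = p ∧
      phess φ t x = A + ε • (1 : Matrix (Fin d) (Fin d) ℝ) ∧
      IsLocalMaxOn (fun q : ℝ × E d => u q.1 q.2 - φ q.1 q.2) (Ioo 0 T ×ˢ O) (t, x) :=
  superjet_realised_by_test_function_general d ε T hε O u t x b p A hjet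
end

section
/- Let d ∈ ℕ, let ‖·‖ be a norm on ℝ^d, let 𝒪 ⊆ ℝ^d be non-empty, let η : 𝒪 → ℝ be upper semi-continuous, let φ : 𝒪 → [0,∞) be lower semi-continuous, assume inf_{α > 0} [sup_{y ∈ 𝒪} (η(y) − α·φ(y))] ∈ ℝ, and let x : (0,∞) → 𝒪 be a family of approximate maximizers, i.e., limsup_{α → ∞} [sup_{y ∈ 𝒪}(η(y) − α·φ(y)) − (η(x_α) − α·φ(x_α))] = 0. Then limsup_{α → ∞} [α·φ(x_α)] = 0. -/
open Set Filter Topology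

/-
Since `φ ≥ 0`, the suprema `S α` decrease in `α`; being bounded below, they converge, so
`S (α / 2) - S α → 0`. Testing the supremum `S (α / 2)` at the approximate maximizer `x_α` gives
`α φ(x_α) = 2 ((η - (α/2) φ)(x_α) - (η - α φ)(x_α)) ≤ 2 (S (α / 2) - S α) + 2 (S α - (η - α φ)(x_α))`,
and both terms on the right tend to `0`.
-/

theorem AntitoneOn.exists_tendsto_atTop_of_bddBelow {α β : Type*} [LinearOrder α] [NoMaxOrder α]
    [ConditionallyCompleteLinearOrder β] [TopologicalSpace β] [OrderTopology β]
    {f : α → β} {a : α} (hf : AntitoneOn f (Ioi a)) (hb : BddBelow (f '' Ioi a)) :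
    ∃ L, Tendsto f atTop (𝓝 L) := by
  obtain ⟨b, hab⟩ := exists_gt a
  have hmem : ∀ t, max t b ∈ Ioi a := fun t => hab.trans_le (le_max_right t b)
  set g : α → β := fun t => f (max t b)
  have hg : Antitone g := fun s t hst =>
    hf (hmem s) (hmem t) (max_le_max hst le_rfl)
  have hgb : BddBelow (range g) :=
    hb.mono (range_subset_iff.2 fun t => mem_image_of_mem f (hmem t))
  refine ⟨⨅ t, g t, (tendsto_atTop_ciInf hg hgb).congr' ?_⟩
  filter_upwards [eventually_ge_atTop b] with t ht
  simp only [g, max_eq_left ht]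

theorem antitoneOn_of_isLUB_sub_mul {X : Type*} {O : Set X} {η φ : X → ℝ} {S : ℝ → ℝ}
    (hφ : ∀ y ∈ O, 0 ≤ φ y)
    (hS : ∀ α ∈ Ioi (0:ℝ), IsLUB ((fun y => η y - α * φ y) '' O) (S α)) :
    AntitoneOn S (Ioi 0) := by
  intro a ha b hb hab
  refine (hS b hb).2 ?_
  rintro _ ⟨y, hy, rfl⟩
  calc η y - b * φ y ≤ η y - a * φ y := by gcongr; exact hφ y hy
    _ ≤ S a := (hS a ha).1 ⟨y, hy, rfl⟩

theorem penalization_term_tendsto_zero_general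
    (d : ℕ)
    (O : Set (EuclideanSpace ℝ (Fin d)))
    (η : EuclideanSpace ℝ (Fin d) → ℝ)
    (φ : EuclideanSpace ℝ (Fin d) → ℝ)
    (hφnonneg : ∀ y ∈ O, 0 ≤ φ y)
    (S : ℝ → ℝ)
    (hS : ∀ α ∈ Ioi (0:ℝ), IsLUB ((fun y => η y - α * φ y) '' O) (S α))
    (hSbdd : ∃ M : ℝ, ∀ α ∈ Ioi (0:ℝ), M ≤ S α)
    (x : ℝ → EuclideanSpace ℝ (Fin d))
    (hxO : ∀ α ∈ Ioi (0:ℝ), x α ∈ O)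
    (hx : Tendsto (fun α => S α - (η (x α) - α * φ (x α))) atTop (𝓝 0)) :
    Tendsto (fun α => α * φ (x α)) atTop (𝓝 0) := by
  obtain ⟨M, hM⟩ := hSbdd
  obtain ⟨L, hL⟩ := (antitoneOn_of_isLUB_sub_mul hφnonneg hS).exists_tendsto_atTop_of_bddBelow
    ⟨M, by rintro _ ⟨α, hα, rfl⟩; exact hM α hα⟩
  have hbound : Tendsto (fun α => 2 * (S (α / 2) - S α + (S α - (η (x α) - α * φ (x α)))))
      atTop (𝓝 0) := by
    simpa using (((hL.comp (tendsto_id.atTop_div_const two_pos)).sub hL).add hx).const_mul 2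
  refine tendsto_of_tendsto_of_tendsto_of_le_of_le' tendsto_const_nhds hbound ?_ ?_
  · filter_upwards [eventually_gt_atTop 0] with α hα
    exact mul_nonneg hα.le (hφnonneg _ (hxO α hα))
  · filter_upwards [eventually_gt_atTop 0] with α hα
    have hhalf := (hS (α / 2) (half_pos hα)).1 ⟨x α, hxO α hα, rfl⟩
    simp only at hhalf
    linarith

/-- Let `O ⊆ ℝ^d` be non-empty, `η : O → ℝ` upper semicontinuous,
`φ : O → [0,∞)` lower semicontinuous, assume that for every `α > 0` the supremum
`S α = sup_{y ∈ O} (η y − α φ y)` exists (as a real number) and that `inf_{α>0} S α ∈ ℝ`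
(i.e. `S` is bounded below on `(0,∞)`), and let `x_α ∈ O` (α > 0) be approximate
maximizers, i.e. `S α − (η x_α − α φ x_α) → 0` as `α → ∞`. Then `α · φ(x_α) → 0` as
`α → ∞`. -/
theorem penalization_term_tendsto_zero
    (d : ℕ) (hd : 0 < d)
    (O : Set (EuclideanSpace ℝ (Fin d))) (hOne : O.Nonempty)
    (η : EuclideanSpace ℝ (Fin d) → ℝ)
    (hη : UpperSemicontinuousOn η O)
    (φ : EuclideanSpace ℝ (Fin d) → ℝ)
    (hφnonneg : ∀ y ∈ O, 0 ≤ φ y)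
    (hφ : LowerSemicontinuousOn φ O)
    (S : ℝ → ℝ)
    (hS : ∀ α ∈ Ioi (0:ℝ), IsLUB ((fun y => η y - α * φ y) '' O) (S α))
    (hSbdd : ∃ M : ℝ, ∀ α ∈ Ioi (0:ℝ), M ≤ S α)
    (x : ℝ → EuclideanSpace ℝ (Fin d))
    (hxO : ∀ α ∈ Ioi (0:ℝ), x α ∈ O)
    (hx : Tendsto (fun α => S α - (η (x α) - α * φ (x α))) atTop (𝓝 0)) :
    Tendsto (fun α => α * φ (x α)) atTop (𝓝 0) :=
  penalization_term_tendsto_zero_general d O η φ hφnonneg S hS hSbdd x hxO hx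
end

section
/- Let d, m ∈ ℕ, ε, T > 0, α, c ≥ 0 with c ≤ α, let B : [0,T] × ℝ^d → ℝ^{d×m} satisfy sup{⟨ξ, B(t,x)B(t,x)* ξ⟩ : t ∈ [0,T], x, ξ ∈ ℝ^d, ‖ξ‖ = 1} = c, and define V : [0,T] × ℝ^d → (0,∞) by V(t,x) = (2π(αt + ε))^{-d/2} exp(‖x‖² / (2(αt + ε))). Then V is infinitely differentiable, and for all t ∈ [0,T], x ∈ ℝ^d, (∂V/∂t)(t,x) + ½ Trace(B(t,x) B(t,x)* (Hess_x V)(t,x)) ≤ 0. -/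
open Set Filter Topology Matrix
open scoped NNReal RealInnerProductSpace

noncomputable section AuxGauss

lemma gauss_fderiv (d : ℕ) (C σ : ℝ) (hσ : σ ≠ 0) (y : E d) :
    HasFDerivAt (fun z : E d => C * Real.exp (‖z‖ ^ 2 / (2 * σ)))
      ((C * Real.exp (‖y‖ ^ 2 / (2 * σ)) / σ) • innerSL ℝ y) y := by
  have h1 : HasFDerivAt (fun z : E d => ‖z‖ ^ 2) (2 • (innerSL ℝ y)) y :=
    (hasStrictFDerivAt_norm_sq y).hasFDerivAt
  have h2 := ((h1.mul_const ((2 * σ)⁻¹)).exp).const_mul C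
  refine h2.congr_fderiv ?_
  ext z
  simp only [ContinuousLinearMap.smul_apply, smul_eq_mul, nsmul_eq_mul, Nat.cast_ofNat,
    div_eq_mul_inv]
  ring

lemma gauss_phess (d : ℕ) (C σ : ℝ) (hσ : σ ≠ 0) (x : E d) (i j : Fin d) :
    fderiv ℝ (fun y : E d => fderiv ℝ
        (fun z : E d => C * Real.exp (‖z‖ ^ 2 / (2 * σ))) y (EuclideanSpace.single j 1))
      x (EuclideanSpace.single i 1)
    = (C * Real.exp (‖x‖ ^ 2 / (2 * σ))) *
        ((if i = j then 1 else 0) / σ + x i * x j / σ ^ 2) := by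
  have heq : (fun y : E d => fderiv ℝ
      (fun z : E d => C * Real.exp (‖z‖ ^ 2 / (2 * σ))) y (EuclideanSpace.single j 1))
      = fun y : E d => C * Real.exp (‖y‖ ^ 2 / (2 * σ)) * y j * σ⁻¹ := by
    funext y
    rw [(gauss_fderiv d C σ hσ y).fderiv]
    simp [EuclideanSpace.inner_single_right, real_inner_comm, div_eq_mul_inv]
    ring
  have hmul := ((gauss_fderiv d C σ hσ x).mul
    ((EuclideanSpace.proj (𝕜 := ℝ) j).hasFDerivAt)).mul_const σ⁻¹
  have hmul' : HasFDerivAt (fun y : E d => C * Real.exp (‖y‖ ^ 2 / (2 * σ)) * y j * σ⁻¹)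
      (σ⁻¹ • ((C * Real.exp (‖x‖ ^ 2 / (2 * σ))) • EuclideanSpace.proj j +
        (EuclideanSpace.proj (𝕜 := ℝ) j) x • (C * Real.exp (‖x‖ ^ 2 / (2 * σ)) / σ) • (innerSL ℝ) x))
      x := hmul
  rw [heq, hmul'.fderiv]
  simp only [ContinuousLinearMap.smul_apply, ContinuousLinearMap.add_apply,
    ContinuousLinearMap.coe_smul', Pi.smul_apply, smul_eq_mul]
  have hs : (EuclideanSpace.proj (𝕜 := ℝ) j) (EuclideanSpace.single i (1:ℝ)) = if i = j then 1 else 0 := by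
    simp [EuclideanSpace.single_apply, eq_comm]
  have hx : (innerSL ℝ x) (EuclideanSpace.single i (1:ℝ)) = x i := by
    simp [EuclideanSpace.inner_single_right]
  have hpj : (EuclideanSpace.proj (𝕜 := ℝ) j) x = x j := rfl
  rw [hs, hx, hpj]
  by_cases h : i = j <;> simp [h] <;> field_simp <;> ring

lemma gauss_ptime (d : ℕ) (x : E d) (α ε t : ℝ) (hσ : 0 < α * t + ε) :
    HasDerivAt (fun s => (2 * Real.pi * (α * s + ε)) ^ (-(d:ℝ)/2) *
        Real.exp (‖x‖ ^ 2 / (2 * (α * s + ε))))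
      (-α * ((2 * Real.pi * (α * t + ε)) ^ (-(d:ℝ)/2) *
          Real.exp (‖x‖ ^ 2 / (2 * (α * t + ε)))) *
        ((d:ℝ) * (α * t + ε) + ‖x‖ ^ 2) / (2 * (α * t + ε) ^ 2)) t := by
  have hπ : (0:ℝ) < 2 * Real.pi * (α * t + ε) := by positivity
  have h0 : HasDerivAt (fun s : ℝ => α * s + ε) α t := by
    simpa using ((hasDerivAt_id t).const_mul α).add_const ε
  have hg : HasDerivAt (fun s : ℝ => 2 * Real.pi * (α * s + ε)) (2 * Real.pi * α) t :=
    h0.const_mul (2 * Real.pi)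
  have hA := hg.rpow_const (p := -(d:ℝ)/2) (Or.inl hπ.ne')
  have h1 : HasDerivAt (fun s : ℝ => 2 * (α * s + ε)) (2 * α) t := h0.const_mul 2
  have h2 := (hasDerivAt_const t (‖x‖ ^ 2)).div h1 (by positivity)
  have hE := h2.exp
  have htot := hA.mul hE
  refine htot.congr_deriv ?_
  rw [Real.rpow_sub_one hπ.ne']
  field_simp
  simp only [Pi.div_apply]
  ring


end AuxGauss

/-- Let `c = sup{⟪ξ, B(t,x)B(t,x)*ξ⟫ : t ∈ [0,T], x, ξ ∈ ℝ^d, ‖ξ‖ = 1}`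
with `c ≤ α`, and let `V(t,x) = (2π(αt+ε))^{−d/2} exp(‖x‖²/(2(αt+ε)))`. Then `V` is
infinitely differentiable on `[0,T] × ℝ^d` and satisfies
`∂ₜV(t,x) + ½ Trace(B(t,x)B(t,x)* Hessₓ V(t,x)) ≤ 0` there. -/
theorem gaussian_lyapunov_supersolution
    (d m : ℕ) (hd : 0 < d) (hm : 0 < m) (ε T : ℝ) (hε : 0 < ε) (hT : 0 < T)
    (α c : ℝ) (hα : 0 ≤ α) (hc : 0 ≤ c) (hcα : c ≤ α)
    (B : ℝ → E d → Matrix (Fin d) (Fin m) ℝ)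
    (hB : IsLUB { r : ℝ | ∃ t ∈ Icc (0:ℝ) T, ∃ x : E d, ∃ ξ : E d, ‖ξ‖ = 1 ∧
      r = (B t x * (B t x)ᵀ).mulVec (fun i => ξ i) ⬝ᵥ (fun i => ξ i) } c)
    (V : ℝ → E d → ℝ)
    (hV : ∀ t : ℝ, ∀ x : E d,
      V t x = (2 * Real.pi * (α * t + ε)) ^ (-(d:ℝ)/2) *
        Real.exp (‖x‖ ^ 2 / (2 * (α * t + ε)))) :
    ContDiffOn ℝ (⊤ : ℕ∞) (fun p : ℝ × E d => V p.1 p.2) (Icc 0 T ×ˢ (univ : Set (E d))) ∧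
    ∀ t ∈ Icc (0:ℝ) T, ∀ x : E d,
      ptime V t x + (1/2) * Matrix.trace (B t x * (B t x)ᵀ * phess V t x) ≤ 0 := by
  have hVfun : (fun p : ℝ × E d => V p.1 p.2)
      = fun p : ℝ × E d => (2 * Real.pi * (α * p.1 + ε)) ^ (-(d:ℝ)/2) *
          Real.exp (‖p.2‖ ^ 2 / (2 * (α * p.1 + ε))) := funext fun p => hV p.1 p.2
  constructor
  · rw [hVfun]
    intro p hp
    have hσ : 0 < α * p.1 + ε :=
      add_pos_of_nonneg_of_pos (mul_nonneg hα hp.1.1) hε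
    have hπ : (0:ℝ) < 2 * Real.pi * (α * p.1 + ε) := by positivity
    apply ContDiffAt.contDiffWithinAt
    have hg : ContDiffAt ℝ (⊤ : ℕ∞) (fun q : ℝ × E d => 2 * Real.pi * (α * q.1 + ε)) p :=
      (contDiff_const.mul ((contDiff_const.mul contDiff_fst).add contDiff_const)).contDiffAt
    have h2g : ContDiffAt ℝ (⊤ : ℕ∞) (fun q : ℝ × E d => 2 * (α * q.1 + ε)) p :=
      (contDiff_const.mul ((contDiff_const.mul contDiff_fst).add contDiff_const)).contDiffAt
    have hns : ContDiffAt ℝ (⊤ : ℕ∞) (fun q : ℝ × E d => ‖q.2‖ ^ 2) p :=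
      ((contDiff_norm_sq ℝ).comp contDiff_snd).contDiffAt
    exact (hg.rpow_const_of_ne hπ.ne').mul ((hns.div h2g (by positivity)).exp)
  · intro t ht x
    have hσ : 0 < α * t + ε := add_pos_of_nonneg_of_pos (mul_nonneg hα ht.1) hε
    set σ := α * t + ε with hσdef
    set Vx := (2 * Real.pi * σ) ^ (-(d:ℝ)/2) * Real.exp (‖x‖ ^ 2 / (2 * σ)) with hVxdef
    have hVxpos : 0 < Vx := by positivity
    set M := B t x * (B t x)ᵀ with hM
    -- time derivative
    have hfunt : (fun s => V s x) = fun s => (2 * Real.pi * (α * s + ε)) ^ (-(d:ℝ)/2) *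
        Real.exp (‖x‖ ^ 2 / (2 * (α * s + ε))) := funext fun s => hV s x
    have hpt : ptime V t x = -α * Vx * ((d:ℝ) * σ + ‖x‖ ^ 2) / (2 * σ ^ 2) := by
      rw [ptime, hfunt]
      exact (gauss_ptime d x α ε t hσ).deriv
    -- Hessian entries
    have hVt : (fun z : E d => V t z)
        = fun z : E d => (2 * Real.pi * σ) ^ (-(d:ℝ)/2) * Real.exp (‖z‖ ^ 2 / (2 * σ)) :=
      funext fun z => hV t z
    have hphess : ∀ i j : Fin d, phess V t x i j
        = Vx * ((if i = j then 1 else 0) / σ + x i * x j / σ ^ 2) := by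
      intro i j
      unfold phess
      rw [hVt]
      exact gauss_phess d _ σ hσ.ne' x i j
    -- quadratic form bound
    have hub := hB.1
    have hquad : ∀ ξ : E d, M.mulVec (fun k => ξ k) ⬝ᵥ (fun k => ξ k) ≤ c * ‖ξ‖ ^ 2 := by
      intro ξ
      rcases eq_or_ne ξ 0 with rfl | hne
      · have hz : (fun k => (0 : E d) k) = (0 : Fin d → ℝ) := rfl
        simp [hz]
      · have hn : 0 < ‖ξ‖ := norm_pos_iff.2 hne
        have hu : ‖(‖ξ‖⁻¹ • ξ : E d)‖ = 1 := norm_smul_inv_norm hne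
        have hmem : M.mulVec (fun k => (‖ξ‖⁻¹ • ξ : E d) k) ⬝ᵥ (fun k => (‖ξ‖⁻¹ • ξ : E d) k)
            ≤ c := hub ⟨t, ht, x, _, hu, rfl⟩
        have hsc : (fun k => (‖ξ‖⁻¹ • ξ : E d) k) = ‖ξ‖⁻¹ • (fun k => ξ k) := rfl
        rw [hsc, Matrix.mulVec_smul, smul_dotProduct, dotProduct_smul,
          smul_eq_mul, smul_eq_mul] at hmem
        calc M.mulVec (fun k => ξ k) ⬝ᵥ (fun k => ξ k)
            = ‖ξ‖ ^ 2 * (‖ξ‖⁻¹ * (‖ξ‖⁻¹ * (M.mulVec (fun k => ξ k) ⬝ᵥ (fun k => ξ k)))) := by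
              field_simp
          _ ≤ ‖ξ‖ ^ 2 * c := mul_le_mul_of_nonneg_left hmem (sq_nonneg _)
          _ = c * ‖ξ‖ ^ 2 := mul_comm _ _
    have hdiag : ∀ i : Fin d, M i i ≤ c := by
      intro i
      have h1 : ‖(EuclideanSpace.single i (1:ℝ) : E d)‖ = 1 := by
        simp [EuclideanSpace.norm_single]
      have h := hub ⟨t, ht, x, EuclideanSpace.single i 1, h1, rfl⟩
      have heval : M.mulVec (fun k => (EuclideanSpace.single i (1:ℝ) : E d) k)
          ⬝ᵥ (fun k => (EuclideanSpace.single i (1:ℝ) : E d) k) = M i i := by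
        simp [Matrix.mulVec, dotProduct, EuclideanSpace.single_apply]
      rw [heval] at h
      exact h
    have htrM : Matrix.trace M ≤ (d:ℝ) * c := by
      have : Matrix.trace M = ∑ i, M i i := rfl
      rw [this]
      calc ∑ i, M i i ≤ ∑ _i : Fin d, c := Finset.sum_le_sum fun i _ => hdiag i
        _ = (d:ℝ) * c := by simp [Finset.sum_const, mul_comm]
    -- trace formula
    have htr : Matrix.trace (M * phess V t x)
        = Vx / σ * Matrix.trace M
          + Vx / σ ^ 2 * (M.mulVec (fun k => x k) ⬝ᵥ (fun k => x k)) := by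
      have hrow : ∀ i : Fin d, ∑ j, M i j * phess V t x j i
          = Vx / σ * M i i + Vx / σ ^ 2 * ((∑ j, M i j * x j) * x i) := by
        intro i
        have h1 : ∀ j : Fin d, M i j * phess V t x j i
            = (if j = i then Vx / σ * M i j else 0) + Vx / σ ^ 2 * (M i j * x j * x i) := by
          intro j
          rw [hphess j i]
          by_cases h : j = i <;> simp [h] <;> ring
        calc ∑ j, M i j * phess V t x j i
            = ∑ j, ((if j = i then Vx / σ * M i j else 0)
                + Vx / σ ^ 2 * (M i j * x j * x i)) := Finset.sum_congr rfl fun j _ => h1 j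
          _ = (∑ j, if j = i then Vx / σ * M i j else 0)
                + ∑ j, Vx / σ ^ 2 * (M i j * x j * x i) := Finset.sum_add_distrib
          _ = Vx / σ * M i i + Vx / σ ^ 2 * ((∑ j, M i j * x j) * x i) := by
              rw [Finset.sum_ite_eq']
              simp only [Finset.mem_univ, if_true]
              rw [Finset.sum_mul, Finset.mul_sum]
      calc Matrix.trace (M * phess V t x) = ∑ i, ∑ j, M i j * phess V t x j i := by
            simp [Matrix.trace, Matrix.diag, Matrix.mul_apply]
        _ = ∑ i, (Vx / σ * M i i + Vx / σ ^ 2 * ((∑ j, M i j * x j) * x i)) :=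
            Finset.sum_congr rfl fun i _ => hrow i
        _ = Vx / σ * Matrix.trace M
              + Vx / σ ^ 2 * (M.mulVec (fun k => x k) ⬝ᵥ (fun k => x k)) := by
            rw [Finset.sum_add_distrib, ← Finset.mul_sum, ← Finset.mul_sum]
            rfl
    -- final inequality
    set Q := M.mulVec (fun k => x k) ⬝ᵥ (fun k => x k) with hQdef
    have hQ : Q ≤ α * ‖x‖ ^ 2 := by
      calc Q ≤ c * ‖x‖ ^ 2 := hquad x
        _ ≤ α * ‖x‖ ^ 2 := mul_le_mul_of_nonneg_right hcα (sq_nonneg _)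
    have htrM' : Matrix.trace M ≤ (d:ℝ) * α := by
      calc Matrix.trace M ≤ (d:ℝ) * c := htrM
        _ ≤ (d:ℝ) * α := mul_le_mul_of_nonneg_left hcα (Nat.cast_nonneg d)
    rw [hpt, htr]
    have hre : -α * Vx * ((d:ℝ) * σ + ‖x‖ ^ 2) / (2 * σ ^ 2)
        + 1 / 2 * (Vx / σ * Matrix.trace M + Vx / σ ^ 2 * Q)
        = Vx / (2 * σ ^ 2) * (σ * Matrix.trace M + Q - α * ((d:ℝ) * σ + ‖x‖ ^ 2)) := by
      field_simp
      ring
    rw [hre]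
    apply mul_nonpos_of_nonneg_of_nonpos (by positivity)
    nlinarith [mul_le_mul_of_nonneg_left htrM' hσ.le]
end
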